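/- In the election constructed from a 3DM instance (M,W,X,Y) with ||M|| > 1 and q = ||W||, the Dodgson score of the distinguished candidate c is at most 3q+1, regardless of whether M contains a matching. -/

import Mathlib

/-- A voter's preference order is a list of candidates in *increasing* order of
preference (the head is the least preferred, the last element the most preferred).
`prefers v x y` means voter `v` strictly prefers `x` to `y`. -/
def prefers {α : Type*} [DecidableEq α] (v : List α) (x y : α) : Prop :=
  v.idxOf y < v.idxOf x

/-- The number of voters in the profile `V` preferring `x` to `y`. -/
def numPrefer {α : Type*} [DecidableEq α] (V : List (List α)) (x y : α) : ℕ :=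
  (V.filter (fun v => decide (v.idxOf y < v.idxOf x))).length

/-- `c` is a Condorcet winner: strictly more than half of the voters prefer `c`
to each other candidate. -/
def CondorcetWinner {α : Type*} [DecidableEq α] (C : Finset α) (V : List (List α))
    (c : α) : Prop :=
  c ∈ C ∧ ∀ d ∈ C, d ≠ c → V.length < 2 * numPrefer V c d

/-- One switch in a single preference order: exchange two adjacent candidates. -/
def SwitchVoter {α : Type*} (v w : List α) : Prop :=
  ∃ (l r : List α) (x y : α), v = l ++ x :: y :: r ∧ w = l ++ y :: x :: r

/-- One switch in a profile: exchange two adjacent candidates in one voter's order. -/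
def SwitchProfile {α : Type*} (V W : List (List α)) : Prop :=
  ∃ (P Q : List (List α)) (v w : List α),
    V = P ++ v :: Q ∧ W = P ++ w :: Q ∧ SwitchVoter v w

/-- `Reach R k a b`: `b` is reachable from `a` in exactly `k` `R`-steps. -/
def Reach {β : Type*} (R : β → β → Prop) : ℕ → β → β → Prop
  | 0, a, b => a = b
  | k + 1, a, b => ∃ m, R a m ∧ Reach R k m b

/-- The Dodgson score of candidate `c`: the minimum number of switches needed to
make `c` a Condorcet winner. -/
noncomputable def DodgsonScore {α : Type*} [DecidableEq α] (C : Finset α)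
    (V : List (List α)) (c : α) : ℕ :=
  sInf {k | ∃ W, Reach SwitchProfile k V W ∧ CondorcetWinner C W c}

/-- `v` is a valid preference order on the candidate set `C`. -/
def IsVoter {α : Type*} [DecidableEq α] (C : Finset α) (v : List α) : Prop :=
  v.Nodup ∧ ∀ x, x ∈ v ↔ x ∈ C

/-- Validity of a 3DM instance `(M, Ws, Xs, Ys)` with `||M|| > 1`, together with
fresh, distinct candidates `c`, `s`, `t`. -/
def TDMOK {α : Type*} [DecidableEq α] (Ws Xs Ys : Finset α)
    (M : List (α × α × α)) (c s t : α) : Prop :=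
  Ws.Nonempty ∧ Xs.Nonempty ∧ Ys.Nonempty ∧
  Disjoint Ws Xs ∧ Disjoint Ws Ys ∧ Disjoint Xs Ys ∧
  Ws.card = Xs.card ∧ Ws.card = Ys.card ∧
  (∀ m ∈ M, m.1 ∈ Ws ∧ m.2.1 ∈ Xs ∧ m.2.2 ∈ Ys) ∧
  M.Nodup ∧ 1 < M.length ∧
  c ∉ Ws ∪ Xs ∪ Ys ∧ s ∉ Ws ∪ Xs ∪ Ys ∧ t ∉ Ws ∪ Xs ∪ Ys ∧
  c ≠ s ∧ c ≠ t ∧ s ≠ t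

/-- The candidate set `W ∪ X ∪ Y ∪ {c, s, t}`. -/
def TDMCands {α : Type*} [DecidableEq α] (Ws Xs Ys : Finset α) (c s t : α) :
    Finset α :=
  Ws ∪ Xs ∪ Ys ∪ {c, s, t}

/-- The voter simulating a triple `(w, x, y)` of `M` (lists are in increasing
preference). If `odd` (1-based odd index) the order is
`⟨s < c < w < x < y < t < rest⟩`, otherwise `s` and `t` are exchanged; `R` lists
the remaining candidates in arbitrary order. -/
def IsTripleVoter {α : Type*} [DecidableEq α] (Cs : Finset α) (c s t w x y : α)
    (odd : Bool) (v : List α) : Prop :=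
  ∃ R : List α, R.Nodup ∧
    (∀ z, z ∈ R ↔ (z ∈ Cs ∧ z ∉ ({s, c, w, x, y, t} : Finset α))) ∧
    v = (if odd then [s, c, w, x, y, t] else [t, c, w, x, y, s]) ++ R

/-- A voter ranking `c` on top of all other candidates. -/
def IsTopVoter {α : Type*} [DecidableEq α] (Cs : Finset α) (c : α)
    (v : List α) : Prop :=
  ∃ R : List α, R.Nodup ∧ (∀ z, z ∈ R ↔ (z ∈ Cs ∧ z ≠ c)) ∧ v = R ++ [c]

/-- The election built from the 3DM instance: one voter per triple of `M`
(`s` and `t` alternating with the parity of the 1-based index), followed by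
`||M|| - 1` voters ranking `c` on top; `2||M|| - 1` voters in total. -/
def IsTDMElection {α : Type*} [DecidableEq α] (Ws Xs Ys : Finset α)
    (M : List (α × α × α)) (c s t : α) (V : List (List α)) : Prop :=
  ∃ V₁ V₂ : List (List α),
    V = V₁ ++ V₂ ∧
    V₂.length = M.length - 1 ∧
    (∃ h : V₁.length = M.length, ∀ i : Fin V₁.length,
      IsTripleVoter (TDMCands Ws Xs Ys c s t) c s t
        (M.get ⟨(i : ℕ), h ▸ i.isLt⟩).1
        (M.get ⟨(i : ℕ), h ▸ i.isLt⟩).2.1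
        (M.get ⟨(i : ℕ), h ▸ i.isLt⟩).2.2
        ((i : ℕ) % 2 == 0) (V₁.get i)) ∧
    (∀ v ∈ V₂, IsTopVoter (TDMCands Ws Xs Ys c s t) c v)

/-- `M` contains a matching: `q = ||Ws||` pairwise coordinate-disjoint triples. -/
def HasMatching {α : Type*} [DecidableEq α] (Ws : Finset α)
    (M : List (α × α × α)) : Prop :=
  ∃ M' : Finset (α × α × α), (∀ m ∈ M', m ∈ M) ∧ M'.card = Ws.card ∧
    ∀ m₁ ∈ M', ∀ m₂ ∈ M', m₁ ≠ m₂ →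
      m₁.1 ≠ m₂.1 ∧ m₁.2.1 ≠ m₂.2.1 ∧ m₁.2.2 ≠ m₂.2.2

/-!
Let `c` climb to the top of the first voter's order. That voter ranks `c` second from the
bottom, so this costs `|C| - 2 ≤ 3q + 1` switches, after which `||M||` of the `2||M|| - 1`
voters (the first one and the `||M|| - 1` top voters) rank `c` above everybody else.
-/

theorem reach_switchProfile_moveToTop {α : Type*} (c : α) :
    ∀ (r l : List α) (P Q : List (List α)),
      Reach SwitchProfile r.length (P ++ (l ++ c :: r) :: Q) (P ++ (l ++ r ++ [c]) :: Q)
  | [], l, P, Q => by simp [Reach]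
  | y :: r, l, P, Q => by
    refine ⟨P ++ (l ++ y :: c :: r) :: Q, ⟨P, Q, _, _, rfl, rfl, l, r, c, y, rfl, rfl⟩, ?_⟩
    simpa using reach_switchProfile_moveToTop c r (l ++ [y]) P Q

section Voting

variable {α : Type*} [DecidableEq α] {C : Finset α} {c : α}

theorem dodgsonScore_le_of_reach {V W : List (List α)} {k : ℕ}
    (hreach : Reach SwitchProfile k V W) (hW : CondorcetWinner C W c) :
    DodgsonScore C V c ≤ k :=
  Nat.sInf_le ⟨W, hreach, hW⟩

theorem IsVoter.length_eq {v : List α} (hv : IsVoter C v) : v.length = C.card := by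
  rw [← List.toFinset_card_of_nodup hv.1]
  congr 1
  ext z
  simp [hv.2]

theorem IsVoter.isTopVoter_moveToTop {l r : List α} (hv : IsVoter C (l ++ c :: r)) :
    IsTopVoter C c (l ++ r ++ [c]) := by
  obtain ⟨hnd, hmem⟩ := hv
  rw [List.nodup_middle, List.nodup_cons] at hnd
  refine ⟨l ++ r, hnd.2, fun z => ⟨fun hz => ⟨(hmem z).1 ?_, ?_⟩, fun ⟨hz, hzc⟩ => ?_⟩, rfl⟩
  · simp only [List.mem_append, List.mem_cons] at hz ⊢
    tauto
  · rintro rfl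
    exact hnd.1 hz
  · simpa [hzc] using (hmem z).2 hz

theorem IsTopVoter.prefers_of_ne {v : List α} (hv : IsTopVoter C c v) {d : α} (hd : d ∈ C)
    (hdc : d ≠ c) : prefers v c d := by
  obtain ⟨R, -, hR, rfl⟩ := hv
  have hdR : d ∈ R := (hR d).2 ⟨hd, hdc⟩
  have hcR : c ∉ R := fun h => ((hR c).1 h).2 rfl
  unfold prefers
  rw [List.idxOf_append_of_mem hdR, List.idxOf_append_of_notMem hcR, List.idxOf_cons_self]
  have := List.idxOf_lt_length_iff.2 hdR
  omega

theorem condorcetWinner_of_sublist_isTopVoter {V T : List (List α)} (hc : c ∈ C)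
    (hT : T.Sublist V) (htop : ∀ v ∈ T, IsTopVoter C c v) (hmaj : V.length < 2 * T.length) :
    CondorcetWinner C V c := by
  refine ⟨hc, fun d hd hdc => hmaj.trans_le ?_⟩
  have hfilter : T.filter (fun v => decide (v.idxOf d < v.idxOf c)) = T :=
    List.filter_eq_self.2 fun v hv => decide_eq_true ((htop v hv).prefers_of_ne hd hdc)
  unfold numPrefer
  rw [← hfilter]
  exact Nat.mul_le_mul_left 2 (hT.filter _).length_le

theorem isVoter_append {p R : List α} (hp : p.Nodup) (hR : R.Nodup)
    (hRmem : ∀ z, z ∈ R ↔ z ∈ C ∧ z ∉ p) (hpC : ∀ z ∈ p, z ∈ C) : IsVoter C (p ++ R) := by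
  refine ⟨List.nodup_append.2 ⟨hp, hR, fun a ha b hb hab => ((hRmem b).1 hb).2 (hab ▸ ha)⟩,
    fun z => ⟨fun hz => ?_, fun hz => ?_⟩⟩
  · rcases List.mem_append.1 hz with hz | hz
    exacts [hpC z hz, ((hRmem z).1 hz).1]
  · by_cases hzp : z ∈ p
    exacts [List.mem_append_left R hzp, List.mem_append_right p ((hRmem z).2 ⟨hz, hzp⟩)]

open List in
theorem IsTripleVoter.isVoter {s t w x y : α} {odd : Bool} {v : List α}
    (hv : IsTripleVoter C c s t w x y odd v) (hnd : [s, c, w, x, y, t].Nodup)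
    (hsub : ({s, c, w, x, y, t} : Finset α) ⊆ C) : IsVoter C v := by
  obtain ⟨R, hRnd, hR, rfl⟩ := hv
  have hp : (if odd then [s, c, w, x, y, t] else [t, c, w, x, y, s]).Perm
      [s, c, w, x, y, t] := by
    cases odd
    · calc [t, c, w, x, y, s] = t :: ([c, w, x, y] ++ [s]) := rfl
        _ ~ t :: s :: [c, w, x, y] := (List.perm_append_singleton s _).cons t
        _ ~ s :: t :: [c, w, x, y] := List.Perm.swap s t _
        _ ~ s :: ([c, w, x, y] ++ [t]) := ((List.perm_append_singleton t _).symm).cons s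
    · exact List.Perm.refl _
  refine isVoter_append (hp.nodup_iff.2 hnd) hRnd (fun z => ?_) (fun z hz => hsub ?_)
  · simpa [hp.mem_iff] using hR z
  · simpa using hp.mem_iff.1 hz

end Voting

section TDM

variable {α : Type*} [DecidableEq α] {Ws Xs Ys : Finset α} {M : List (α × α × α)} {c s t : α}

theorem TDMOK.card_tdmCands_le (hok : TDMOK Ws Xs Ys M c s t) :
    (TDMCands Ws Xs Ys c s t).card ≤ 3 * Ws.card + 3 := by
  obtain ⟨-, -, -, -, -, -, hX, hY, -⟩ := hok
  calc (TDMCands Ws Xs Ys c s t).card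
      ≤ Ws.card + Xs.card + Ys.card + ({c, s, t} : Finset α).card := by
        unfold TDMCands
        grw [Finset.card_union_le, Finset.card_union_le, Finset.card_union_le]
    _ ≤ 3 * Ws.card + 3 := by grw [Finset.card_le_three]; omega

theorem TDMOK.isVoter_of_isTripleVoter (hok : TDMOK Ws Xs Ys M c s t) {m : α × α × α}
    (hm : m ∈ M) {odd : Bool} {v : List α}
    (hv : IsTripleVoter (TDMCands Ws Xs Ys c s t) c s t m.1 m.2.1 m.2.2 odd v) :
    IsVoter (TDMCands Ws Xs Ys c s t) v := by
  obtain ⟨-, -, -, hWX, hWY, hXY, -, -, hM, -, -, hc, hs, ht, hcs, hct, hst⟩ := hok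
  obtain ⟨w, x, y⟩ := m
  obtain ⟨hw, hx, hy⟩ : w ∈ Ws ∧ x ∈ Xs ∧ y ∈ Ys := hM _ hm
  refine hv.isVoter ?_ ?_
  · have hwx := Finset.disjoint_left.1 hWX hw
    have hwy := Finset.disjoint_left.1 hWY hw
    have hxy := Finset.disjoint_left.1 hXY hx
    simp only [Finset.mem_union, not_or] at hc hs ht
    simp only [List.nodup_cons, List.mem_cons, List.not_mem_nil, List.nodup_nil, not_or,
      not_false_eq_true, and_true]
    and_intros <;> rintro rfl <;> simp_all
  · intro z hz
    simp only [Finset.mem_insert, Finset.mem_singleton] at hz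
    rcases hz with rfl | rfl | rfl | rfl | rfl | rfl <;> simp [TDMCands, *]

end TDM

/-- In the election from a 3DM instance with `||M|| > 1` and
`q = ||W||`, the Dodgson score of `c` is at most `3q + 1`, regardless of
whether `M` contains a matching. -/
theorem tdm_score_upper_bound {α : Type*} [DecidableEq α]
    (Ws Xs Ys : Finset α) (M : List (α × α × α)) (c s t : α)
    (V : List (List α))
    (hok : TDMOK Ws Xs Ys M c s t)
    (hel : IsTDMElection Ws Xs Ys M c s t V) :
    DodgsonScore (TDMCands Ws Xs Ys c s t) V c ≤ 3 * Ws.card + 1 := by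
  obtain ⟨V₁, V₂, rfl, hV₂, ⟨hV₁, htriple⟩, htop⟩ := hel
  obtain ⟨-, -, -, -, -, -, -, -, -, -, hMlen, -⟩ := id hok
  obtain ⟨v₀, V₁', rfl⟩ := List.exists_cons_of_length_pos (by omega : 0 < V₁.length)
  have h0 : 0 < (v₀ :: V₁').length := by simp
  have hvoter := hok.isVoter_of_isTripleVoter (List.get_mem M ⟨0, hV₁ ▸ h0⟩) (htriple ⟨0, h0⟩)
  obtain ⟨R, -, -, hv₀⟩ := htriple ⟨0, h0⟩
  set m := M.get ⟨0, hV₁ ▸ h0⟩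
  set r := [m.1, m.2.1, m.2.2, t] ++ R
  replace hv₀ : v₀ = [s] ++ c :: r := by simpa [r] using hv₀
  replace hvoter : IsVoter _ ([s] ++ c :: r) := hv₀ ▸ hvoter
  have hreach :
      Reach SwitchProfile r.length (v₀ :: V₁' ++ V₂) (([s] ++ r ++ [c]) :: (V₁' ++ V₂)) := by
    simpa [hv₀] using reach_switchProfile_moveToTop c r [s] [] (V₁' ++ V₂)
  have hwinner : CondorcetWinner (TDMCands Ws Xs Ys c s t) (([s] ++ r ++ [c]) :: (V₁' ++ V₂)) c :=
    condorcetWinner_of_sublist_isTopVoter (by simp [TDMCands])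
      ((List.sublist_append_right V₁' V₂).cons_cons _)
      (List.forall_mem_cons.2 ⟨hvoter.isTopVoter_moveToTop, htop⟩)
      (by simp only [List.length_cons, List.length_append] at hV₁ ⊢; omega)
  have hlen := hvoter.length_eq
  have hcard := hok.card_tdmCands_le
  simp only [List.length_append, List.length_cons] at hlen
  exact (dodgsonScore_le_of_reach hreach hwinner).trans (by omega)
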